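/- Let λ ∈ Γ_k with λ₁ ≥ ⋯ ≥ λₙ, and suppose σ_k(λ) ≤ F for some F > 0. If K₀ > 0 satisfies (K₀/n)^k ≥ F, then λₙ + K₀ ≥ 0. -/

import Mathlib

/-- The `m`-th elementary symmetric polynomial of `x : Fin n → ℝ`. -/
noncomputable def esymm (n m : ℕ) (x : Fin n → ℝ) : ℝ :=
  ∑ s ∈ Finset.powersetCard m (Finset.univ : Finset (Fin n)), ∏ i ∈ s, x i

/-!
The substantial input is that deleting any entry of a vector in `Γ_m` leaves a vector in
`Γ_{m-1}`. By induction on `m`: if `σ_{m-1}(λ|a) ≤ 0`, shift every entry by the `t ≥ 0` at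
which `σ_{m-1}(λ|a + t)` vanishes; shifts by `t ≥ 0` preserve `Γ_m`. Newton's inequality for
the real-rooted polynomial `∏ (X + λ_i + t)`, together with `σ_{m-2}(λ|a + t) > 0`, then
gives `σ_m(λ + t) = σ_m(λ|a + t) ≤ 0`, which is absurd.

Deleting `λ_1, …, λ_{k-1}` therefore leaves `λ_k + ⋯ + λ_n > 0`, so `λ_k > 0`, and expanding
`σ_k` successively along `λ_1, …, λ_k` gives `σ_k(λ) ≥ λ_1 ⋯ λ_k ≥ λ_k^k`. Hence
`λ_k ≤ K₀/n` and `λ_n > -(n - k) λ_k ≥ -K₀`.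
-/

open Polynomial

namespace Multiset

section CommSemiring

variable {R : Type*} [CommSemiring R]

theorem esymm_zero (s : Multiset R) : s.esymm 0 = 1 := by
  simp [esymm, powersetCard_zero_left]

theorem esymm_cons_succ (a : R) (s : Multiset R) (j : ℕ) :
    (a ::ₘ s).esymm (j + 1) = s.esymm (j + 1) + a * s.esymm j := by
  simp only [esymm, powersetCard_cons, map_add, sum_add, map_map, Function.comp_def, prod_cons,
    sum_map_mul_left]

theorem esymm_one (s : Multiset R) : s.esymm 1 = s.sum := by
  simp [esymm, powersetCard_one, map_map]

theorem esymm_eq_zero_of_card_lt {s : Multiset R} {j : ℕ} (h : card s < j) : s.esymm j = 0 := by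
  simp [esymm, powersetCard_eq_empty _ h]

end CommSemiring

theorem esymm_nonneg {s : Multiset ℝ} (hs : ∀ x ∈ s, 0 ≤ x) (j : ℕ) : 0 ≤ s.esymm j :=
  sum_nonneg fun _ hp => by
    obtain ⟨t, ht, rfl⟩ := mem_map.mp hp
    exact prod_nonneg fun x hx => hs x (mem_of_le (mem_powersetCard.mp ht).1 hx)

theorem esymm_pos {s : Multiset ℝ} (hs : ∀ x ∈ s, 0 < x) {j : ℕ} (hj : j ≤ card s) :
    0 < s.esymm j := by
  induction s using Multiset.induction generalizing j with
  | empty => simp_all [esymm_zero]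
  | cons a s ih =>
    rcases j with _ | j
    · simp [esymm_zero]
    rw [esymm_cons_succ]
    have hs' : ∀ x ∈ s, 0 < x := fun x hx => hs x (mem_cons_of_mem hx)
    have := esymm_nonneg (fun x hx => (hs' x hx).le) (j + 1)
    have := ih hs' (by simpa using hj)
    have := hs a (mem_cons_self a s)
    positivity

theorem esymm_map_add_const {R : Type*} [CommSemiring R] (s : Multiset R) (t : R) {j : ℕ}
    (hj : j ≤ card s) :
    (s.map (· + t)).esymm j = ∑ i ∈ Finset.range (j + 1),
      ((i + (card s - j)).choose (card s - j) : R) * s.esymm (j - i) * t ^ i := by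
  have htaylor : ((s.map (· + t)).map fun x => X + C x).prod
      = taylor t (s.map fun x => X + C x).prod := by
    show _ = taylorAlgHom t _
    rw [map_multiset_prod, map_map, map_map]
    congr 1
    refine map_congr rfl fun x _ => ?_
    simp [taylor_X, taylor_C, add_assoc, add_comm (C t)]
  have hdeg : (hasseDeriv (card s - j) (s.map fun x => X + C x).prod).natDegree < j + 1 := by
    have := natDegree_hasseDeriv_le (s.map fun x => X + C x).prod (card s - j)
    have : (s.map fun x => X + C x).prod.natDegree ≤ card s :=
      (natDegree_multiset_prod_le _).trans
        (by simpa [map_map] using Nat.mul_le_mul_left (card s) natDegree_X_le)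
    omega
  have hcoeff := prod_X_add_C_coeff (s.map (· + t)) (k := card s - j) (by simp)
  rw [card_map, Nat.sub_sub_self hj, htaylor, taylor_coeff, eval_eq_sum_range' hdeg] at hcoeff
  rw [← hcoeff]
  refine Finset.sum_congr rfl fun i hi => ?_
  rw [hasseDeriv_coeff, prod_X_add_C_coeff s (by grind),
    show card s - (i + (card s - j)) = j - i by omega]

theorem continuous_esymm_map_add_const (s : Multiset ℝ) {j : ℕ} (hj : j ≤ card s) :
    Continuous fun t : ℝ => (s.map (· + t)).esymm j := by
  simp_rw [esymm_map_add_const s _ hj]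
  fun_prop

theorem exists_nonneg_esymm_map_add_const_eq_zero {s : Multiset ℝ} {j : ℕ} (hj : j ≤ card s)
    (hs : s.esymm j ≤ 0) : ∃ t, 0 ≤ t ∧ (s.map (· + t)).esymm j = 0 := by
  obtain ⟨M, hM⟩ := (s.toFinset.image Neg.neg).bddAbove
  set T := max M 0 + 1
  have hT : ∀ x ∈ s, 0 < x + T := fun x hx => by
    have : -x ≤ M := hM (by simp [hx])
    have := le_max_left M 0
    linarith
  have hfT : 0 < (s.map (· + T)).esymm j :=
    esymm_pos (by simpa using hT) (by rwa [card_map])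
  have hf0 : (s.map (· + 0)).esymm j ≤ 0 := by simpa using hs
  obtain ⟨t, ht, hzero⟩ := intermediate_value_Icc (by positivity)
    (continuous_esymm_map_add_const s hj).continuousOn ⟨hf0, hfT.le⟩
  exact ⟨t, ht.1, hzero⟩

theorem two_mul_esymm_mul_esymm_le_sq (s : Multiset ℝ) {N : ℕ} (hs : card s = N + 2) :
    2 * s.esymm (N + 2) * s.esymm N ≤ s.esymm (N + 1) ^ 2 := by
  induction s using Multiset.induction generalizing N with
  | empty => simp at hs
  | cons r s ih =>
    rcases N with _ | N
    · obtain ⟨x, rfl⟩ := card_eq_one.mp (by simpa using hs)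
      simp only [zero_add, esymm_zero, esymm_pair_two, esymm_pair_one]
      nlinarith [sq_nonneg (r - x)]
    · have hs' : card s = N + 2 := by simpa using hs
      have IH := ih hs'
      rw [esymm_cons_succ, esymm_cons_succ, esymm_cons_succ,
        esymm_eq_zero_of_card_lt (by omega : card s < N + 1 + 2)]
      nlinarith [sq_nonneg (s.esymm (N + 2)), mul_nonneg (sq_nonneg r) (sub_nonneg.mpr IH)]

end Multiset

namespace Polynomial

theorem coeff_zero_mul_coeff_two_nonpos {p : ℝ[X]} (hroots : p.roots.card = p.natDegree)
    (hdeg : 2 ≤ p.natDegree) (h1 : p.coeff 1 = 0) : p.coeff 0 * p.coeff 2 ≤ 0 := by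
  obtain ⟨N, hN⟩ : ∃ N, p.natDegree = N + 2 := ⟨p.natDegree - 2, by omega⟩
  have hlc : p.leadingCoeff ≠ 0 := leadingCoeff_ne_zero.mpr (by rintro rfl; simp at hdeg)
  have vieta := fun i (hi : i ≤ N + 2) => hN ▸ coeff_eq_esymm_roots_of_card hroots (hN ▸ hi)
  have hvanish : p.roots.esymm (N + 1) = 0 := by
    simpa [vieta 1 (by omega), hlc, show N + 2 - 1 = N + 1 by omega] using h1
  have hnewton := p.roots.two_mul_esymm_mul_esymm_le_sq (hroots.trans hN)
  rw [hvanish] at hnewton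
  rw [vieta 0 (by omega), vieta 2 (by omega), Nat.sub_zero, Nat.add_sub_cancel]
  have hsign : ((-1 : ℝ) ^ (N + 2)) * (-1) ^ N = 1 := by
    rw [← pow_add, show N + 2 + N = 2 * (N + 1) by ring, pow_mul]; norm_num
  calc p.leadingCoeff * (-1) ^ (N + 2) * p.roots.esymm (N + 2)
        * (p.leadingCoeff * (-1) ^ N * p.roots.esymm N)
      = p.leadingCoeff ^ 2 * (p.roots.esymm (N + 2) * p.roots.esymm N) := by
        linear_combination
          (p.leadingCoeff ^ 2 * (p.roots.esymm (N + 2) * p.roots.esymm N)) * hsign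
    _ ≤ 0 := mul_nonpos_of_nonneg_of_nonpos (sq_nonneg _) (by nlinarith)

theorem card_roots_iterate_derivative {p : ℝ[X]} (hroots : p.roots.card = p.natDegree) (j : ℕ) :
    (derivative^[j] p).roots.card = (derivative^[j] p).natDegree ∧
      (derivative^[j] p).natDegree = p.natDegree - j := by
  have hle : p.roots.card ≤ (derivative^[j] p).roots.card + j := by
    induction j with
    | zero => simp
    | succ j ih =>
      rw [Function.iterate_succ_apply']
      have := card_roots_le_derivative (derivative^[j] p)
      omega
  have := card_roots' (derivative^[j] p)
  have := natDegree_iterate_derivative p j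
  omega

end Polynomial

namespace Multiset

theorem esymm_mul_esymm_nonpos_of_esymm_eq_zero {v : Multiset ℝ} {m : ℕ}
    (hcard : m + 2 ≤ card v) (hzero : v.esymm (m + 1) = 0) :
    v.esymm m * v.esymm (m + 2) ≤ 0 := by
  set P : ℝ[X] := (v.map fun x => X + C x).prod
  have hP : P = ((v.map Neg.neg).map fun a => X - C a).prod := by
    simp [P, map_map, sub_eq_add_neg]
  have hProots : P.roots.card = P.natDegree := by
    rw [hP, roots_multiset_prod_X_sub_C, natDegree_multiset_prod_X_sub_C_eq_card]
  have hPdeg : P.natDegree = card v := by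
    rw [hP, natDegree_multiset_prod_X_sub_C_eq_card, card_map]
  -- Differentiating `card v - (m + 2)` times moves `σ_{m+2}, σ_{m+1}, σ_m` down to the
  -- coefficients of degree `0, 1, 2`, and keeps all roots real.
  set k₀ := card v - (m + 2)
  set Q := derivative^[k₀] P
  obtain ⟨hQroots, hQdeg⟩ := card_roots_iterate_derivative hProots k₀
  have hcoeff : ∀ i ≤ 2,
      Q.coeff i = ((i + k₀).descFactorial k₀ : ℝ) * v.esymm (m + 2 - i) := by
    intro i hi
    rw [coeff_iterate_derivative, nsmul_eq_mul, prod_X_add_C_coeff v (by omega)]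
    congr 2
    omega
  have hpos : ∀ i, 0 < ((i + k₀).descFactorial k₀ : ℝ) := fun i => by
    exact_mod_cast Nat.descFactorial_pos.mpr (by omega)
  have h1 : Q.coeff 1 = 0 := by
    rw [hcoeff 1 (by norm_num), show m + 2 - 1 = m + 1 by omega, hzero, mul_zero]
  have := coeff_zero_mul_coeff_two_nonpos hQroots (by omega) h1
  rw [hcoeff 0 (by norm_num), hcoeff 2 (by norm_num), Nat.sub_zero, Nat.add_sub_cancel] at this
  nlinarith [mul_pos (hpos 0) (hpos 2)]

/-- The Gårding cone `Γ_m`, on multisets of any size. -/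
def InGardingCone (m : ℕ) (s : Multiset ℝ) : Prop :=
  ∀ j, 1 ≤ j → j ≤ m → 0 < s.esymm j

namespace InGardingCone

variable {m : ℕ} {s : Multiset ℝ}

theorem mono {m' : ℕ} (h : InGardingCone m s) (hle : m' ≤ m) : InGardingCone m' s :=
  fun j h1 h2 => h j h1 (h2.trans hle)

theorem le_card (h : InGardingCone m s) (hm : 1 ≤ m) : m ≤ card s := by
  by_contra! hc
  simpa [esymm_eq_zero_of_card_lt hc] using h m hm le_rfl

theorem of_cons_of_nonpos {a : ℝ} (ha : a ≤ 0) (h : InGardingCone m (a ::ₘ s)) :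
    InGardingCone m s := by
  suffices ∀ j ≤ m, 0 < s.esymm j from fun j _ hj => this j hj
  intro j hj
  induction j with
  | zero => simp [esymm_zero]
  | succ j ih =>
    have := h (j + 1) (by omega) hj
    rw [esymm_cons_succ] at this
    nlinarith [ih (by omega)]

theorem pos_of_card_eq (h : InGardingCone m s) (hm : 1 ≤ m) (hc : card s = m) :
    ∀ x ∈ s, 0 < x := by
  intro x hx
  by_contra! hx0
  rw [← cons_erase hx] at h
  have := (h.of_cons_of_nonpos hx0).le_card hm
  rw [card_erase_of_mem hx, Nat.pred_eq_sub_one] at this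
  omega

theorem map_add_const (h : InGardingCone m s) {t : ℝ} (ht : 0 ≤ t) :
    InGardingCone m (s.map (· + t)) := by
  intro j hj1 hjm
  have hj : j ≤ card s := (h.mono hjm).le_card hj1
  rw [esymm_map_add_const s t hj]
  refine Finset.sum_pos' (fun i hi => ?_) ⟨0, by simp, by simpa using h j hj1 hjm⟩
  have : 0 ≤ s.esymm (j - i) := by
    rcases Nat.eq_zero_or_pos (j - i) with hz | hp
    · simp [hz, esymm_zero]
    · exact (h (j - i) hp (by omega)).le
  positivity

theorem esymm_erase_pos (h : InGardingCone (m + 1) s) {a : ℝ} (ha : a ∈ s) :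
    0 < (s.erase a).esymm m := by
  induction m generalizing s a with
  | zero => simp [esymm_zero]
  | succ m ih =>
    have hcard : card (s.erase a) = card s - 1 := card_erase_of_mem ha
    rcases (h.le_card (by omega)).eq_or_lt with hc | hc
    · exact esymm_pos (fun x hx => h.pos_of_card_eq (by omega) hc.symm x (mem_of_mem_erase hx))
        (by omega)
    by_contra! hneg
    obtain ⟨t, ht, hzero⟩ := exists_nonneg_esymm_map_add_const_eq_zero (by omega) hneg
    have hshift := h.map_add_const ht
    have herase : (s.map (· + t)).erase (a + t) = (s.erase a).map (· + t) :=
      (map_erase _ (add_left_injective t) a s).symm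
    have hlow : 0 < ((s.erase a).map (· + t)).esymm m :=
      herase ▸ ih (hshift.mono (by omega)) (mem_map_of_mem _ ha)
    have hnewton := esymm_mul_esymm_nonpos_of_esymm_eq_zero (by rw [card_map]; omega) hzero
    have htop := hshift (m + 2) (by omega) le_rfl
    rw [← cons_erase (mem_map_of_mem (· + t) ha), herase, esymm_cons_succ, hzero, mul_zero,
      add_zero] at htop
    nlinarith

theorem erase (h : InGardingCone m s) {a : ℝ} (ha : a ∈ s) :
    InGardingCone (m - 1) (s.erase a) :=
  fun j _ hj => (h.mono (by omega)).esymm_erase_pos ha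

theorem of_add {t u : Multiset ℝ} (h : InGardingCone m (t + u)) :
    InGardingCone (m - card t) u := by
  induction t using Multiset.induction generalizing m with
  | empty => simpa using h
  | cons a t ih =>
    rw [cons_add] at h
    have := ih (by simpa using h.erase (mem_cons_self a _))
    rwa [card_cons, add_comm, ← Nat.sub_sub]

theorem prod_le_esymm {t u : Multiset ℝ} (h : InGardingCone (card t + 1) (t + u))
    (ht : ∀ x ∈ t, 0 ≤ x) : t.prod ≤ (t + u).esymm (card t) := by
  induction t using Multiset.induction with
  | empty => simp [esymm_zero]
  | cons a t ih =>
    rw [cons_add] at h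
    have h' : InGardingCone (card t + 1) (t + u) := by simpa using h.erase (mem_cons_self a _)
    rw [prod_cons, card_cons, cons_add, esymm_cons_succ]
    have := h' (card t + 1) (by omega) le_rfl
    have := ih h' (fun x hx => ht x (mem_cons_of_mem hx))
    have := ht a (mem_cons_self a t)
    nlinarith

end InGardingCone

end Multiset

open Finset

theorem esymm_eq_multiset_esymm (n m : ℕ) (x : Fin n → ℝ) :
    esymm n m x = (univ.val.map x).esymm m :=
  (Finset.esymm_map_val x univ m).symm

section Fintype

variable {ι : Type*} [Fintype ι] [DecidableEq ι]

theorem map_univ_val_eq_add_compl {β : Type*} (f : ι → β) (A : Finset ι) :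
    univ.val.map f = A.val.map f + Aᶜ.val.map f := by
  rw [← Multiset.map_add, ← disjUnion_val A Aᶜ disjoint_compl_right, disjUnion_eq_union,
    union_compl]

theorem Multiset.InGardingCone.sum_compl_pos {f : ι → ℝ} {m : ℕ}
    (h : InGardingCone m (univ.val.map f)) {A : Finset ι} (hA : #A < m) :
    0 < ∑ i ∈ Aᶜ, f i := by
  rw [map_univ_val_eq_add_compl f A] at h
  have := h.of_add 1 (by simp) (by simp; omega)
  rwa [esymm_one, ← sum_eq_multiset_sum] at this

theorem Multiset.InGardingCone.prod_le_esymm_univ {f : ι → ℝ} {A : Finset ι}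
    (h : InGardingCone (#A + 1) (univ.val.map f)) (hA : ∀ i ∈ A, 0 ≤ f i) :
    ∏ i ∈ A, f i ≤ (univ.val.map f).esymm #A := by
  rw [map_univ_val_eq_add_compl f A] at h ⊢
  have := InGardingCone.prod_le_esymm (t := A.val.map f) (by rwa [Multiset.card_map])
    (by simpa using hA)
  rwa [Multiset.card_map, ← prod_eq_multiset_prod] at this

end Fintype

section Antitone

variable {n : ℕ} {lam : Fin n → ℝ} {a : Fin n}

theorem Multiset.InGardingCone.sum_Ici_pos (h : InGardingCone (a + 1) (univ.val.map lam)) :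
    0 < ∑ i ∈ Finset.Ici a, lam i := by
  have := h.sum_compl_pos (A := Finset.Iio a) (by simp)
  rwa [show (Finset.Iio a)ᶜ = Finset.Ici a by ext; simp] at this

theorem Multiset.InGardingCone.pos_of_antitone (hlam : Antitone lam)
    (h : InGardingCone (a + 1) (univ.val.map lam)) : 0 < lam a := by
  have hle : ∑ i ∈ Finset.Ici a, lam i ≤ #(Finset.Ici a) • lam a :=
    Finset.sum_le_card_nsmul _ _ _ fun i hi => hlam (Finset.mem_Ici.mp hi)
  rw [nsmul_eq_mul] at hle
  exact pos_of_mul_pos_right (h.sum_Ici_pos.trans_le hle) (Nat.cast_nonneg _)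

theorem Multiset.InGardingCone.pow_le_esymm_of_antitone (hlam : Antitone lam)
    (h : InGardingCone (a + 2) (univ.val.map lam)) :
    lam a ^ ((a : ℕ) + 1) ≤ (univ.val.map lam).esymm (a + 1) := by
  have hpos : 0 < lam a := (h.mono (by omega)).pos_of_antitone hlam
  have hge : ∀ i ∈ Finset.Iic a, lam a ≤ lam i := fun i hi => hlam (Finset.mem_Iic.mp hi)
  calc lam a ^ ((a : ℕ) + 1) = ∏ _i ∈ Finset.Iic a, lam a := by simp [Fin.card_Iic]
    _ ≤ ∏ i ∈ Finset.Iic a, lam i := Finset.prod_le_prod (fun _ _ => hpos.le) hge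
    _ ≤ _ := by
      have := Multiset.InGardingCone.prod_le_esymm_univ (A := Finset.Iic a)
        (by rwa [Fin.card_Iic]) fun i hi => hpos.le.trans (hge i hi)
      rwa [Fin.card_Iic] at this

theorem Multiset.InGardingCone.add_mul_pos_of_antitone (hlam : Antitone lam)
    (h : InGardingCone (a + 1) (univ.val.map lam)) {b : Fin n} (hab : a ≤ b) :
    0 < lam b + ((n - 1 - a : ℕ) : ℝ) * lam a := by
  have hb : b ∈ Finset.Ici a := Finset.mem_Ici.mpr hab
  have hsum := h.sum_Ici_pos
  rw [← Finset.add_sum_erase _ _ hb] at hsum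
  have hle : ∑ i ∈ (Finset.Ici a).erase b, lam i ≤ #((Finset.Ici a).erase b) • lam a :=
    Finset.sum_le_card_nsmul _ _ _ fun i hi =>
      hlam (Finset.mem_Ici.mp (Finset.mem_of_mem_erase hi))
  rw [Finset.card_erase_of_mem hb, Fin.card_Ici, nsmul_eq_mul, Nat.sub_right_comm] at hle
  linarith

end Antitone

theorem stmt1 (n k : ℕ) (hk : 1 ≤ k) (hkn : k ≤ n - 1)
    (lam : Fin n → ℝ) (F K₀ : ℝ)
    (hGamma : ∀ m, 1 ≤ m → m ≤ k + 1 → 0 < esymm n m lam)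
    (hdec : ∀ i j : Fin n, i ≤ j → lam j ≤ lam i)
    (hσ : esymm n k lam ≤ F)
    (hK₀ : 0 < K₀) (hKF : (K₀ / (n : ℝ)) ^ k ≥ F) :
    lam ⟨n - 1, by omega⟩ + K₀ ≥ 0 := by
  obtain ⟨j, rfl⟩ : ∃ j, k = j + 1 := ⟨k - 1, by omega⟩
  set a : Fin n := ⟨j, by omega⟩
  have hcone : Multiset.InGardingCone ((a : ℕ) + 2) (univ.val.map lam) := fun m h1 h2 =>
    esymm_eq_multiset_esymm n m lam ▸ hGamma m h1 h2
  have hpos : 0 < lam a := (hcone.mono (by omega)).pos_of_antitone hdec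
  have hn : (0 : ℝ) < n := by exact_mod_cast (show 0 < n by omega)
  have hy : lam a ≤ K₀ / n := by
    refine (pow_le_pow_iff_left₀ hpos.le (by positivity) (Nat.succ_ne_zero j)).mp ?_
    calc lam a ^ (j + 1) ≤ esymm n (j + 1) lam :=
          (esymm_eq_multiset_esymm n _ lam).symm ▸ hcone.pow_le_esymm_of_antitone hdec
      _ ≤ (K₀ / n) ^ (j + 1) := hσ.trans hKF
  have htail := (hcone.mono (by omega)).add_mul_pos_of_antitone (a := a) hdec
    (b := ⟨n - 1, by omega⟩) (Fin.mk_le_mk.mpr (by omega))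
  have hcoef : ((n - 1 - j : ℕ) : ℝ) * lam a ≤ K₀ := calc
    _ ≤ (n : ℝ) * (K₀ / n) :=
      mul_le_mul (by exact_mod_cast (by omega : n - 1 - j ≤ n)) hy hpos.le hn.le
    _ = K₀ := mul_div_cancel₀ K₀ hn.ne'
  linarith
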